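/- Let μ ≤ κ ≤ θ be uncountable cardinals with κ, θ regular, and Y ⊆ P_κ H(θ) stationary. If SP_Y(μ, κ, H(θ)) holds (every μ-Y-slender (κ, H(θ))-list has a cofinal branch), then AGP_Y(μ, κ, θ) holds: for every cofinal S ⊆ P_κ H(θ) and every x ∈ H(θ), the set of M ∈ Y such that (M, x) is almost μ-guessed by S is stationary in P_κ H(θ). -/

import Mathlib

open Cardinal

universe u

/-- `H(θ)`: the class of sets hereditarily of cardinality `< θ`. -/
def Hset (θ : Cardinal.{u + 1}) : Set ZFSet.{u} :=
  {x : ZFSet.{u} | ZFSet.Hereditarily (fun y => #y.toSet < θ) x}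

/-- `C` is a club in `P_κ(A)`: elements are subsets of `A` of size `< κ`, `C` is closed
under unions of nonempty `⊆`-chains of length `< κ`, and `C` is cofinal. -/
def ClubIn (κ : Cardinal.{u + 1}) (A : Set ZFSet.{u}) (C : Set (Set ZFSet.{u})) : Prop :=
  (∀ y ∈ C, y ⊆ A ∧ #y < κ) ∧
    (∀ D : Set (Set ZFSet.{u}), D ⊆ C → D.Nonempty → #D < κ → IsChain (· ⊆ ·) D →
      ⋃₀ D ∈ C) ∧
    (∀ x : Set ZFSet.{u}, x ⊆ A → #x < κ → ∃ y ∈ C, x ⊆ y)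

/-- `S` is stationary in `P_κ(A)`: it meets every club in `P_κ(A)`. -/
def StatIn (κ : Cardinal.{u + 1}) (A : Set ZFSet.{u}) (S : Set (Set ZFSet.{u})) : Prop :=
  (∀ y ∈ S, y ⊆ A ∧ #y < κ) ∧ ∀ C : Set (Set ZFSet.{u}), ClubIn κ A C → (S ∩ C).Nonempty

/-- `d` is `(μ, M)`-approximated (as a subset of `x`): for every `z ∈ M ∩ P_μ(x)` there is
`e ∈ M` with `d ∩ z = e ∩ z`. -/
def Approx (μ : Cardinal.{u + 1}) (M : Set ZFSet.{u}) (x : ZFSet.{u})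
    (d : Set ZFSet.{u}) : Prop :=
  ∀ z : ZFSet.{u}, z ∈ M → z.toSet ⊆ x.toSet → #z.toSet < μ →
    ∃ e ∈ M, d ∩ z.toSet = e.toSet ∩ z.toSet

/-- `d` is `M`-guessed: there is `e ∈ M` with `d ∩ M = e ∩ M`. -/
def Guessed (M : Set ZFSet.{u}) (d : Set ZFSet.{u}) : Prop :=
  ∃ e ∈ M, d ∩ M = e.toSet ∩ M

/-- Every `(μ, M)`-approximated subset of `x` is `M`-guessed. -/
def GuessingFor (μ : Cardinal.{u + 1}) (M : Set ZFSet.{u}) (x : ZFSet.{u}) : Prop :=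
  ∀ d : Set ZFSet.{u}, d ⊆ x.toSet → Approx μ M x d → Guessed M d

/-- The `(κ, X)`-list `d` is `μ`-`Y`-slender: for all sufficiently large `θ` there is a
club `C ⊆ P_κ(H(θ))` such that for all `M ∈ C` with `M ∩ X ∈ Y` and all
`y ∈ M ∩ P_μ(X)`, `d_{M ∩ X} ∩ y ∈ M`. -/
def Slender (μ κ : Cardinal.{u + 1}) (X : Set ZFSet.{u}) (Y : Set (Set ZFSet.{u}))
    (d : Set ZFSet.{u} → Set ZFSet.{u}) : Prop :=
  ∃ θ₀ : Cardinal.{u + 1}, ∀ θ : Cardinal.{u + 1}, θ₀ ≤ θ →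
    ∃ C : Set (Set ZFSet.{u}), ClubIn κ (Hset θ) C ∧
      ∀ M ∈ C, M ∩ X ∈ Y →
        ∀ y : ZFSet.{u}, y ∈ M → y.toSet ⊆ X → #y.toSet < μ →
          ∃ e ∈ M, e.toSet = d (M ∩ X) ∩ y.toSet

/-- `b` is a cofinal branch of the `(κ, X)`-list `d`. -/
def CofBranch (κ : Cardinal.{u + 1}) (X : Set ZFSet.{u})
    (d : Set ZFSet.{u} → Set ZFSet.{u}) (b : Set ZFSet.{u}) : Prop :=
  b ⊆ X ∧ ∀ x : Set ZFSet.{u}, x ⊆ X → #x < κ →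
    ∃ z : Set ZFSet.{u}, z ⊆ X ∧ #z < κ ∧ x ⊆ z ∧ b ∩ x = d z ∩ x

/-- `b` is a `Y`-ineffable branch of the `(κ, X)`-list `d`: the set of `x ∈ Y` with
`b ∩ x = d_x` is stationary in `P_κ(X)`. -/
def IneffBranch (κ : Cardinal.{u + 1}) (X : Set ZFSet.{u}) (Y : Set (Set ZFSet.{u}))
    (d : Set ZFSet.{u} → Set ZFSet.{u}) (b : Set ZFSet.{u}) : Prop :=
  b ⊆ X ∧ StatIn κ X {x : Set ZFSet.{u} | x ∈ Y ∧ b ∩ x = d x}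

/-- `(M, x)` is almost `μ`-guessed by `S`: `x ∈ M` and every `(μ, M)`-approximated subset
of `x` is `N`-guessed for some `N ∈ S` with `x ∈ N ⊆ M`. -/
def AlmostGuessed (μ : Cardinal.{u + 1}) (S : Set (Set ZFSet.{u})) (M : Set ZFSet.{u})
    (x : ZFSet.{u}) : Prop :=
  x ∈ M ∧ ∀ d : Set ZFSet.{u}, d ⊆ x.toSet → Approx μ M x d →
    ∃ N ∈ S, x ∈ N ∧ N ⊆ M ∧ Guessed N d

/-! If the almost-guessed models were nonstationary, a club `C₀` would avoid them, and every
`M ∈ Y ∩ C₀` containing `x` would carry a `(μ, M)`-approximated `c_M ⊆ x` that is guessed by no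
`N ∈ S` with `x ∈ N ⊆ M`. Choose for every `z ∈ P_κ H(θ)` some `M_z ∈ Y ∩ C₀` containing `z` and
`x` (with `M_z = z` whenever `z` itself qualifies) and put `d_z = c_{M_z} ∩ z`. This list is
slender, as witnessed by the models that trace into `C₀`, are closed under binary intersections
and include their elements of size `< μ`: for such `M` and small `y ∈ M`, approximating `c_M` at
`y ∩ x ∈ M` puts `d_M ∩ y` into `M`. A cofinal branch `b` then yields `N ∈ S` containing `x` and
`x ∩ b`, and some `z ⊇ N` with `b ∩ N = d_z ∩ N`; so `x ∩ b` guesses `c_{M_z}` on `N`, a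
contradiction. -/

open Set

section Cardinal

variable {α : Type u} {κ : Cardinal.{u}}

lemma mk_union_lt (hκ : ℵ₀ ≤ κ) {s t : Set α} (hs : #s < κ) (ht : #t < κ) :
    #(s ∪ t : Set α) < κ :=
  (mk_union_le s t).trans_lt (add_lt_of_lt hκ hs ht)

lemma mk_sUnion_lt (hκ : κ.IsRegular) {D : Set (Set α)} (hD : #D < κ)
    (h : ∀ s ∈ D, #s < κ) : #(⋃₀ D) < κ := by
  rw [sUnion_eq_biUnion]
  exact (card_biUnion_lt_iff_forall_of_isRegular hκ hD).2 h

lemma mk_range_nat_le (f : ℕ → α) : #(range f) ≤ ℵ₀ := by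
  simpa using mk_range_le_lift (f := f)

lemma mk_iUnion_nat_lt (hκ : κ.IsRegular) (hℵ : ℵ₀ < κ) {s : ℕ → Set α}
    (h : ∀ n, #(s n) < κ) : #(⋃ n, s n) < κ := by
  rw [← sUnion_range]
  exact mk_sUnion_lt hκ ((mk_range_nat_le s).trans_lt hℵ) (forall_mem_range.2 h)

end Cardinal

lemma monotone_iterate_of_mapsTo {β : Type*} [Preorder β] {P : Set β} {g : β → β}
    (hg : MapsTo g P P) (hext : ∀ t ∈ P, t ≤ g t) {s : β} (hs : s ∈ P) :
    Monotone fun n => g^[n] s :=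
  monotone_nat_of_le_succ fun n => by
    rw [Function.iterate_succ_apply']
    exact hext _ (hg.iterate n hs)

/-- `P_κ(A)`. -/
def smallSubsets (κ : Cardinal.{u + 1}) (A : Set ZFSet.{u}) : Set (Set ZFSet.{u}) :=
  {s | s ⊆ A ∧ #s < κ}

section Club

variable {κ : Cardinal.{u + 1}} {A : Set ZFSet.{u}} {C C₁ C₂ : Set (Set ZFSet.{u})}

lemma iUnion_mem_smallSubsets (hκ : κ.IsRegular) (hℵ : ℵ₀ < κ) {s : ℕ → Set ZFSet.{u}}
    (hs : ∀ n, s n ∈ smallSubsets κ A) : ⋃ n, s n ∈ smallSubsets κ A :=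
  ⟨iUnion_subset fun n => (hs n).1, mk_iUnion_nat_lt hκ hℵ fun n => (hs n).2⟩

lemma ClubIn.exists_choice (hC : ClubIn κ A C) :
    ∃ g : Set ZFSet.{u} → Set ZFSet.{u}, ∀ s ∈ smallSubsets κ A, g s ∈ C ∧ s ⊆ g s := by
  have h : ∀ s, ∃ t, s ∈ smallSubsets κ A → t ∈ C ∧ s ⊆ t := fun s => by
    by_cases hs : s ∈ smallSubsets κ A
    · obtain ⟨t, htC, hst⟩ := hC.2.2 s hs.1 hs.2
      exact ⟨t, fun _ => ⟨htC, hst⟩⟩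
    · exact ⟨s, fun h => absurd h hs⟩
  choose g hg using h
  exact ⟨g, hg⟩

lemma ClubIn.iUnion_mem (hC : ClubIn κ A C) (hℵ : ℵ₀ < κ) {s : ℕ → Set ZFSet.{u}}
    (hmono : Monotone s) (hsC : ∀ n, s n ∈ C) : ⋃ n, s n ∈ C := by
  rw [← sUnion_range]
  exact hC.2.1 _ (range_subset_iff.2 hsC) (range_nonempty s)
    ((mk_range_nat_le s).trans_lt hℵ) hmono.isChain_range

lemma ClubIn.iUnion_mem_of_interleave (hC : ClubIn κ A C) (hℵ : ℵ₀ < κ)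
    {s t : ℕ → Set ZFSet.{u}} (hst : ∀ n, s n ⊆ t n) (hts : ∀ n, t n ⊆ s (n + 1))
    (htC : ∀ n, t n ∈ C) : ⋃ n, s n ∈ C := by
  have heq : ⋃ n, s n = ⋃ n, t n :=
    (iUnion_mono hst).antisymm (iUnion_subset fun n => (hts n).trans (subset_iUnion s _))
  rw [heq]
  exact hC.iUnion_mem hℵ (monotone_nat_of_le_succ fun n => (hts n).trans (hst _)) htC

lemma ClubIn.inter (hC₁ : ClubIn κ A C₁) (hC₂ : ClubIn κ A C₂) (hℵ : ℵ₀ < κ) :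
    ClubIn κ A (C₁ ∩ C₂) := by
  refine ⟨fun M hM => hC₁.1 M hM.1, fun D hD hne hDκ hch => ?_, fun s hs hsκ => ?_⟩
  · exact ⟨hC₁.2.1 D (hD.trans inter_subset_left) hne hDκ hch,
      hC₂.2.1 D (hD.trans inter_subset_right) hne hDκ hch⟩
  obtain ⟨g₁, hg₁⟩ := hC₁.exists_choice
  obtain ⟨g₂, hg₂⟩ := hC₂.exists_choice
  have hmaps : MapsTo (g₂ ∘ g₁) (smallSubsets κ A) (smallSubsets κ A) := fun t ht =>
    hC₂.1 _ (hg₂ _ (hC₁.1 _ (hg₁ t ht).1)).1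
  have hext : ∀ t ∈ smallSubsets κ A, t ⊆ g₁ t ∧ g₁ t ⊆ g₂ (g₁ t) := fun t ht =>
    ⟨(hg₁ t ht).2, (hg₂ _ (hC₁.1 _ (hg₁ t ht).1)).2⟩
  set a : ℕ → Set ZFSet.{u} := fun n => (g₂ ∘ g₁)^[n] s
  have ha : ∀ n, a n ∈ smallSubsets κ A := fun n => hmaps.iterate n ⟨hs, hsκ⟩
  have hsucc : ∀ n, a (n + 1) = g₂ (g₁ (a n)) := fun n => Function.iterate_succ_apply' _ _ _
  refine ⟨⋃ n, a n, ⟨?_, ?_⟩, subset_iUnion a 0⟩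
  · exact hC₁.iUnion_mem_of_interleave hℵ (t := fun n => g₁ (a n)) (fun n => (hext _ (ha n)).1)
      (fun n => (hsucc n).symm ▸ (hext _ (ha n)).2) fun n => (hg₁ _ (ha n)).1
  · exact hC₂.iUnion_mem_of_interleave hℵ (t := fun n => a (n + 1))
      (fun n => (hsucc n).symm ▸ ((hext _ (ha n)).1.trans (hext _ (ha n)).2)) (fun _ => subset_rfl)
      fun n => (hsucc n).symm ▸ (hg₂ _ (hC₁.1 _ (hg₁ _ (ha n)).1)).1

lemma clubIn_superset (hκ : κ.IsRegular) {w : Set ZFSet.{u}} (hw : w ∈ smallSubsets κ A) :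
    ClubIn κ A {M ∈ smallSubsets κ A | w ⊆ M} := by
  refine ⟨fun M hM => hM.1, fun D hD hne hDκ _ => ⟨⟨sUnion_subset fun M hM => (hD hM).1.1,
    mk_sUnion_lt hκ hDκ fun M hM => (hD hM).1.2⟩, ?_⟩, fun s hs hsκ => ?_⟩
  · obtain ⟨M, hM⟩ := hne
    exact (hD hM).2.trans (subset_sUnion_of_mem hM)
  · exact ⟨s ∪ w, ⟨⟨union_subset hs hw.1, mk_union_lt hκ.aleph0_le hsκ hw.2⟩,
      subset_union_right⟩, subset_union_left⟩

lemma clubIn_closedUnder (hκ : κ.IsRegular) (hℵ : ℵ₀ < κ)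
    (F : ZFSet.{u} → ZFSet.{u} → Set ZFSet.{u})
    (hF : ∀ a ∈ A, ∀ b ∈ A, F a b ∈ smallSubsets κ A) :
    ClubIn κ A {M ∈ smallSubsets κ A | ∀ a ∈ M, ∀ b ∈ M, F a b ⊆ M} := by
  refine ⟨fun M hM => hM.1, fun D hD hne hDκ hch => ⟨⟨sUnion_subset fun M hM => (hD hM).1.1,
    mk_sUnion_lt hκ hDκ fun M hM => (hD hM).1.2⟩, ?_⟩, fun s hs hsκ => ?_⟩
  · rintro a ⟨Ma, hMa, ha⟩ b ⟨Mb, hMb, hb⟩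
    rcases hch.total hMa hMb with h | h
    · exact ((hD hMb).2 a (h ha) b hb).trans (subset_sUnion_of_mem hMb)
    · exact ((hD hMa).2 a ha b (h hb)).trans (subset_sUnion_of_mem hMa)
  set step : Set ZFSet.{u} → Set ZFSet.{u} := fun t => t ∪ ⋃₀ image2 F t t
  have hmaps : MapsTo step (smallSubsets κ A) (smallSubsets κ A) := by
    rintro t ⟨htA, htκ⟩
    refine ⟨union_subset htA (sUnion_subset ?_), mk_union_lt hκ.aleph0_le htκ
      (mk_sUnion_lt hκ (mk_image2_le.trans_lt (mul_lt_of_lt hκ.aleph0_le htκ htκ)) ?_)⟩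
    all_goals rintro _ ⟨a, ha, b, hb, rfl⟩
    exacts [(hF a (htA ha) b (htA hb)).1, (hF a (htA ha) b (htA hb)).2]
  have hmono := monotone_iterate_of_mapsTo hmaps (fun t _ => subset_union_left) ⟨hs, hsκ⟩
  refine ⟨⋃ n, step^[n] s, ⟨iUnion_mem_smallSubsets hκ hℵ fun n => hmaps.iterate n ⟨hs, hsκ⟩, ?_⟩,
    subset_iUnion (fun n => step^[n] s) 0⟩
  intro a ha b hb
  obtain ⟨m, ha⟩ := mem_iUnion.1 ha
  obtain ⟨n, hb⟩ := mem_iUnion.1 hb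
  refine Subset.trans ?_ (subset_iUnion _ (max m n + 1))
  rw [Function.iterate_succ_apply']
  exact (subset_sUnion_of_mem (mem_image2_of_mem (hmono (le_max_left m n) ha)
    (hmono (le_max_right m n) hb))).trans subset_union_right

lemma ClubIn.lift (hC : ClubIn κ A C) (hκ : κ.IsRegular) (hℵ : ℵ₀ < κ) {B : Set ZFSet.{u}}
    (hAB : A ⊆ B) : ClubIn κ B {M ∈ smallSubsets κ B | M ∩ A ∈ C} := by
  refine ⟨fun M hM => hM.1, fun D hD hne hDκ hch => ⟨⟨sUnion_subset fun M hM => (hD hM).1.1,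
    mk_sUnion_lt hκ hDκ fun M hM => (hD hM).1.2⟩, ?_⟩, fun s hs hsκ => ?_⟩
  · have htrace : ⋃₀ D ∩ A = ⋃₀ ((· ∩ A) '' D) := by
      rw [sUnion_image, sUnion_eq_biUnion, iUnion₂_inter]
    rw [htrace]
    exact hC.2.1 _ (image_subset_iff.2 fun M hM => (hD hM).2) (hne.image _)
      (mk_image_le.trans_lt hDκ)
      (hch.image_of_map_rel _ _ _ fun _ _ h => inter_subset_inter_left A h)
  obtain ⟨g, hg⟩ := hC.exists_choice
  have htrace : ∀ t ∈ smallSubsets κ B, t ∩ A ∈ smallSubsets κ A := fun t ht =>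
    ⟨inter_subset_right, (mk_le_mk_of_subset inter_subset_left).trans_lt ht.2⟩
  set step : Set ZFSet.{u} → Set ZFSet.{u} := fun t => t ∪ g (t ∩ A)
  have hmaps : MapsTo step (smallSubsets κ B) (smallSubsets κ B) := fun t ht =>
    have hgA := hC.1 _ (hg _ (htrace t ht)).1
    ⟨union_subset ht.1 (hgA.1.trans hAB), mk_union_lt hκ.aleph0_le ht.2 hgA.2⟩
  set a : ℕ → Set ZFSet.{u} := fun n => step^[n] s
  have ha : ∀ n, a n ∈ smallSubsets κ B := fun n => hmaps.iterate n ⟨hs, hsκ⟩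
  have hsucc : ∀ n, a (n + 1) = a n ∪ g (a n ∩ A) := fun n => Function.iterate_succ_apply' _ _ _
  refine ⟨⋃ n, a n, ⟨iUnion_mem_smallSubsets hκ hℵ ha, ?_⟩, subset_iUnion a 0⟩
  rw [iUnion_inter]
  refine hC.iUnion_mem_of_interleave hℵ (t := fun n => g (a n ∩ A))
    (fun n => (hg _ (htrace _ (ha n))).2) (fun n => ?_) fun n => (hg _ (htrace _ (ha n))).1
  rw [hsucc]
  exact subset_inter subset_union_right (hC.1 _ (hg _ (htrace _ (ha n))).1).1

lemma StatIn.exists_selector {Y : Set (Set ZFSet.{u})} (hY : StatIn κ A Y) (hC : ClubIn κ A C)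
    (hκ : κ.IsRegular) (hℵ : ℵ₀ < κ) {x : ZFSet.{u}} (hx : x ∈ A) :
    ∃ sel : Set ZFSet.{u} → Set ZFSet.{u},
      (∀ z ∈ smallSubsets κ A, sel z ∈ Y ∩ C ∧ insert x z ⊆ sel z) ∧
        ∀ M ∈ Y ∩ C, x ∈ M → sel M = M := by
  have h : ∀ z, ∃ M, (z ∈ smallSubsets κ A → M ∈ Y ∩ C ∧ insert x z ⊆ M) ∧
      (z ∈ Y ∩ C → x ∈ z → M = z) := by
    intro z
    by_cases hz : z ∈ Y ∩ C ∧ x ∈ z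
    · exact ⟨z, fun _ => ⟨hz.1, insert_subset hz.2 subset_rfl⟩, fun _ _ => rfl⟩
    by_cases hzA : z ∈ smallSubsets κ A
    · have hw : insert x z ∈ smallSubsets κ A := ⟨insert_subset hx hzA.1,
        mk_insert_le.trans_lt (add_lt_of_lt hκ.aleph0_le hzA.2 (one_lt_aleph0.trans hℵ))⟩
      obtain ⟨M, hMY, hMC, -, hzM⟩ := hY.2 _ (hC.inter (clubIn_superset hκ hw) hℵ)
      exact ⟨M, fun _ => ⟨⟨hMY, hMC⟩, hzM⟩, fun h1 h2 => absurd ⟨h1, h2⟩ hz⟩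
    · exact ⟨z, fun h => absurd h hzA, fun _ _ => rfl⟩
  choose sel hsel using h
  exact ⟨sel, fun z hz => (hsel z).1 hz, fun M hM hxM => (hsel M).2 hM hxM⟩

end Club

section Hset

variable {θ : Cardinal.{u + 1}}

lemma hset_mono {θ' : Cardinal.{u + 1}} (h : θ ≤ θ') : Hset.{u} θ ⊆ Hset θ' := by
  intro x
  induction x using ZFSet.inductionOn with
  | _ x ih =>
    intro hx
    exact ZFSet.hereditarily_iff.2
      ⟨(ZFSet.Hereditarily.self hx).trans_le h, fun y hy => ih y hy (ZFSet.Hereditarily.mem hx hy)⟩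

lemma mem_hset_of_mem {x y : ZFSet.{u}} (hx : x ∈ Hset θ) (hy : y ∈ x) : y ∈ Hset θ :=
  ZFSet.Hereditarily.mem hx hy

lemma mem_hset_of_subset {x y : ZFSet.{u}} (hx : x ∈ Hset θ) (hyx : y.toSet ⊆ x.toSet) :
    y ∈ Hset θ :=
  ZFSet.hereditarily_iff.2 ⟨(mk_le_mk_of_subset hyx).trans_lt
    (ZFSet.Hereditarily.self hx), fun _ hz => mem_hset_of_mem hx (hyx hz)⟩

end Hset

lemma ZFSet.toSet_inter (x y : ZFSet.{u}) : (x ∩ y).toSet = x.toSet ∩ y.toSet :=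
  ZFSet.coe_inter x y

lemma slender_of_approx {μ κ θ : Cardinal.{u + 1}} (hκ : κ.IsRegular) (hμ : ℵ₀ < μ) (hμκ : μ ≤ κ)
    {Y C₀ : Set (Set ZFSet.{u})} (hC₀ : ClubIn κ (Hset θ) C₀) {x : ZFSet.{u}} (hx : x ∈ Hset θ)
    {d : Set ZFSet.{u} → Set ZFSet.{u}}
    (hd : ∀ M ∈ Y, M ∈ C₀ → x ∈ M → ∃ c ⊆ x.toSet, Approx μ M x c ∧ d M = c ∩ M) :
    Slender μ κ (Hset θ) Y d := by
  have hℵ : ℵ₀ < κ := hμ.trans_le hμκ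
  refine ⟨θ, fun θ' hθθ' => ?_⟩
  have hinterF : ∀ a ∈ Hset θ', ∀ b ∈ Hset θ', {a ∩ b} ∈ smallSubsets κ (Hset θ') :=
    fun a ha b _ => ⟨singleton_subset_iff.2
      (mem_hset_of_subset ha (ZFSet.toSet_inter a b ▸ inter_subset_left)),
      (mk_singleton _).trans_lt (one_lt_aleph0.trans hℵ)⟩
  have hsmallF : ∀ a ∈ Hset θ', ∀ _ ∈ Hset θ',
      {t ∈ a.toSet | #a.toSet < μ} ∈ smallSubsets κ (Hset θ') := by
    intro a ha _ _
    refine ⟨fun t ht => mem_hset_of_mem ha ht.1, ?_⟩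
    by_cases hμa : #a.toSet < μ
    · exact (mk_le_mk_of_subset (sep_subset _ _)).trans_lt (hμa.trans_le hμκ)
    · simp [hμa, hℵ.pos]
  have hxθ' : {x} ∈ smallSubsets κ (Hset θ') :=
    ⟨singleton_subset_iff.2 (hset_mono hθθ' hx),
      (mk_singleton _).trans_lt (one_lt_aleph0.trans hℵ)⟩
  refine ⟨_, (((hC₀.lift hκ hℵ (hset_mono hθθ')).inter
    (clubIn_closedUnder hκ hℵ _ hinterF) hℵ).inter
    (clubIn_closedUnder hκ hℵ _ hsmallF) hℵ).inter (clubIn_superset hκ hxθ') hℵ, ?_⟩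
  rintro M ⟨⟨⟨⟨-, hMC₀⟩, -, hinter⟩, -, hsmall⟩, -, hxM⟩ hMY y hyM hyH hyμ
  rw [singleton_subset_iff] at hxM
  have hyx : y ∩ x ∈ M := hinter y hyM x hxM rfl
  obtain ⟨c, hcx, hc, hdM⟩ := hd _ hMY hMC₀ ⟨hxM, hx⟩
  have hyxx : (y ∩ x).toSet ⊆ x.toSet := ZFSet.toSet_inter y x ▸ inter_subset_right
  obtain ⟨e, heM, hce⟩ := hc (y ∩ x) ⟨hyx, mem_hset_of_subset hx hyxx⟩ hyxx
    ((mk_le_mk_of_subset (ZFSet.toSet_inter y x ▸ inter_subset_left)).trans_lt hyμ)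
  have hyM' : y.toSet ⊆ M ∩ Hset θ := fun t ht => ⟨hsmall y hyM y hyM ⟨ht, hyμ⟩, hyH ht⟩
  refine ⟨e ∩ (y ∩ x), hinter e heM.1 _ hyx rfl, ?_⟩
  rw [hdM, ZFSet.toSet_inter, ← hce, ZFSet.toSet_inter]
  ext t
  simp only [mem_inter_iff]
  constructor
  · rintro ⟨hc, hy, -⟩
    exact ⟨⟨hc, hyM' hy⟩, hy⟩
  · rintro ⟨⟨hc, -⟩, hy⟩
    exact ⟨hc, hy, hcx hc⟩

lemma guessed_of_inter_eq {N c b : Set ZFSet.{u}} {x : ZFSet.{u}} (hcx : c ⊆ x.toSet)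
    (hN : ZFSet.sep (· ∈ b) x ∈ N) (hcb : c ∩ N = b ∩ N) : Guessed N c := by
  refine ⟨_, hN, Set.ext fun t => ⟨fun ⟨hc, htN⟩ => ?_, fun ⟨ht, htN⟩ => ?_⟩⟩
  · exact ⟨ZFSet.mem_sep.2 ⟨hcx hc, (hcb ▸ ⟨hc, htN⟩ : t ∈ b ∩ N).1⟩, htN⟩
  · exact ⟨(hcb ▸ ⟨(ZFSet.mem_sep.1 ht).2, htN⟩ : t ∈ c ∩ N).1, htN⟩

theorem stmt14_general (μ κ θ : Cardinal.{u + 1})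
    (hκreg : κ.IsRegular)
    (hμunc : Cardinal.aleph0 < μ) (hμκ : μ ≤ κ)
    (Y : Set (Set ZFSet.{u})) (hY : StatIn κ (Hset θ) Y)
    (hSP : ∀ d : Set ZFSet.{u} → Set ZFSet.{u}, (∀ x : Set ZFSet.{u}, d x ⊆ x) →
      Slender μ κ (Hset θ) Y d → ∃ b : Set ZFSet.{u}, CofBranch κ (Hset θ) d b) :
    ∀ S : Set (Set ZFSet.{u}),
      (∀ N ∈ S, N ⊆ Hset θ ∧ #N < κ) →
      (∀ x : Set ZFSet.{u}, x ⊆ Hset θ → #x < κ → ∃ N ∈ S, x ⊆ N) →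
      ∀ x : ZFSet.{u}, x ∈ Hset θ →
        StatIn κ (Hset θ) {M : Set ZFSet.{u} | M ∈ Y ∧ AlmostGuessed μ S M x} := by
  intro S hS hScof x hx
  have hℵ : ℵ₀ < κ := hμunc.trans_le hμκ
  refine ⟨fun M hM => hY.1 M hM.1, fun C₀ hC₀ => ?_⟩
  by_contra hnone
  have hcex : ∀ M, ∃ c : Set ZFSet.{u}, M ∈ Y ∩ C₀ → x ∈ M →
      c ⊆ x.toSet ∧ Approx μ M x c ∧ ∀ N ∈ S, x ∈ N → N ⊆ M → ¬Guessed N c := by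
    intro M
    by_cases hM : M ∈ Y ∩ C₀ ∧ x ∈ M
    · have hfail : ¬AlmostGuessed μ S M x := fun h => hnone ⟨M, ⟨hM.1.1, h⟩, hM.1.2⟩
      simp only [AlmostGuessed, hM.2, true_and, not_forall, not_exists, not_and] at hfail
      obtain ⟨c, hcx, hc, hN⟩ := hfail
      exact ⟨c, fun _ _ => ⟨hcx, hc, hN⟩⟩
    · exact ⟨∅, fun h1 h2 => absurd ⟨h1, h2⟩ hM⟩
  choose c hc using hcex
  obtain ⟨sel, hsel, hsel_fix⟩ := hY.exists_selector hC₀ hκreg hℵ hx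
  have hslender : Slender μ κ (Hset θ) Y fun z => c (sel z) ∩ z :=
    slender_of_approx hκreg hμunc hμκ hC₀ hx fun M hMY hMC hxM =>
      have hM := hc M ⟨hMY, hMC⟩ hxM
      ⟨c M, hM.1, hM.2.1, by rw [hsel_fix M ⟨hMY, hMC⟩ hxM]⟩
  obtain ⟨b, -, hb⟩ := hSP _ (fun z => inter_subset_right) hslender
  obtain ⟨N, hNS, hxbN⟩ := hScof {x, ZFSet.sep (· ∈ b) x}
    (pair_subset hx (mem_hset_of_subset hx fun _ ht => (ZFSet.mem_sep.1 ht).1))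
    ((toFinite _).lt_aleph0.trans_le hκreg.aleph0_le)
  obtain ⟨z, hzA, hzκ, hNz, hbz⟩ := hb N (hS N hNS).1 (hS N hNS).2
  obtain ⟨hzYC, hxz⟩ := hsel z ⟨hzA, hzκ⟩
  obtain ⟨hcx, -, hnot⟩ := hc (sel z) hzYC (hxz (mem_insert x z))
  refine hnot N hNS (hxbN (mem_insert _ _)) (hNz.trans ((subset_insert x z).trans hxz))
    (guessed_of_inter_eq hcx (hxbN (mem_insert_of_mem _ rfl)) ?_)
  rw [hbz, inter_assoc, inter_eq_right.2 hNz]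

/-- If `μ ≤ κ ≤ θ` are uncountable with `κ, θ` regular, `Y ⊆ P_κ(H(θ))` is stationary, and
`SP_Y(μ, κ, H(θ))` holds (every `μ`-`Y`-slender `(κ, H(θ))`-list has a cofinal branch),
then `AGP_Y(μ, κ, θ)` holds: for every cofinal `S ⊆ P_κ(H(θ))` and every `x ∈ H(θ)`,
the set of `M ∈ Y` such that `(M, x)` is almost `μ`-guessed by `S` is stationary in
`P_κ(H(θ))`. -/
theorem stmt14 (μ κ θ : Cardinal.{u + 1})
    (hκreg : κ.IsRegular) (hθreg : θ.IsRegular)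
    (hμunc : Cardinal.aleph0 < μ) (hμκ : μ ≤ κ) (hκθ : κ ≤ θ)
    (Y : Set (Set ZFSet.{u})) (hY : StatIn κ (Hset θ) Y)
    (hSP : ∀ d : Set ZFSet.{u} → Set ZFSet.{u}, (∀ x : Set ZFSet.{u}, d x ⊆ x) →
      Slender μ κ (Hset θ) Y d → ∃ b : Set ZFSet.{u}, CofBranch κ (Hset θ) d b) :
    ∀ S : Set (Set ZFSet.{u}),
      (∀ N ∈ S, N ⊆ Hset θ ∧ #N < κ) →
      (∀ x : Set ZFSet.{u}, x ⊆ Hset θ → #x < κ → ∃ N ∈ S, x ⊆ N) →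
      ∀ x : ZFSet.{u}, x ∈ Hset θ →
        StatIn κ (Hset θ) {M : Set ZFSet.{u} | M ∈ Y ∧ AlmostGuessed μ S M x} :=
  stmt14_general μ κ θ hκreg hμunc hμκ Y hY hSP
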